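/- arXiv:1407.6144 — 6 statements merged into one kernel-verified Lean document; each statement's English description precedes it below -/
import Mathlib

section
/- Let P be a (±)ILP with k constraints and n ≥ 2 variables, and suppose two distinct variables x_j and x_{j'} have identical coefficient vectors, i.e., e_{i,j} = e_{i,j'} for all 1 ≤ i ≤ k. Let P' be the (±)ILP obtained from P by deleting the variable x_{j'} and replacing the range of x_j by the sumset R(x_j) + R(x_{j'}) = {L_j + L_{j'}, …, R_j + R_{j'}} (keeping all constants and all other coefficients and ranges). Then OPT(P) = OPT(P'). -/
/-- A `(±)ILP` with `k` constraints and variables indexed by `ι`: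
constants `d i`, coefficients `e i j ∈ {+1, -1}`, and variable ranges `{L j, …, R j}`. -/
structure PMILP (k : ℕ) (ι : Type) [Fintype ι] where
  d : Fin k → ℤ
  e : Fin k → ι → ℤ
  L : ι → ℤ
  R : ι → ℤ
  e_pm : ∀ i j, e i j = 1 ∨ e i j = -1
  le : ∀ j, L j ≤ R j

/-- A tuple is feasible if each variable lies in its range. -/
def PMILP.Feasible {k : ℕ} {ι : Type} [Fintype ι] (P : PMILP k ι) (x : ι → ℤ) : Prop :=
  ∀ j, P.L j ≤ x j ∧ x j ≤ P.R j

/-- The value of a tuple: the maximum over the constraints of `d i + ∑ j, e i j * x j`. -/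
def PMILP.val {k : ℕ} {ι : Type} [Fintype ι] (P : PMILP k ι) (hk : 0 < k) (x : ι → ℤ) : ℤ :=
  Finset.univ.sup' ⟨⟨0, hk⟩, Finset.mem_univ _⟩ fun i => P.d i + ∑ j, P.e i j * x j

/-- `OPT(P)`: the minimum value over feasible integer tuples. -/
noncomputable def PMILP.opt {k : ℕ} {ι : Type} [Fintype ι] (P : PMILP k ι) (hk : 0 < k) : ℤ :=
  sInf {v : ℤ | ∃ x : ι → ℤ, P.Feasible x ∧ P.val hk x = v}

/-!
Merging `x_{j'}` into `x_j` sends a tuple `x` to the tuple with `x_j + x_{j'}` in place of `x_j`.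
Since the two variables carry the same coefficients, every constraint, hence the objective, keeps
its value; the merged tuple is feasible for `P'` because the ranges add up, and conversely every
value in `{L_j + L_{j'}, …, R_j + R_{j'}}` splits as a sum of values in the two ranges. So `P`
and `P'` have the same set of attained values, and the same optimum.
-/

open Finset

namespace PMILP

variable {k : ℕ} {ι : Type} [Fintype ι]

theorem opt_eq_of_feasible_val {ι' : Type} [Fintype ι'] (P : PMILP k ι) (Q : PMILP k ι')
    (hk : 0 < k)
    (hPQ : ∀ x, P.Feasible x → ∃ y, Q.Feasible y ∧ Q.val hk y = P.val hk x)
    (hQP : ∀ y, Q.Feasible y → ∃ x, P.Feasible x ∧ P.val hk x = Q.val hk y) :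
    P.opt hk = Q.opt hk := by
  unfold opt
  congr 1
  ext v
  constructor
  · rintro ⟨x, hx, rfl⟩
    exact hPQ x hx
  · rintro ⟨y, hy, rfl⟩
    exact hQP y hy

end PMILP

theorem Int.exists_split_of_le_of_le {a b c d s : ℤ} (hab : a ≤ b) (hcd : c ≤ d)
    (hs : a + c ≤ s) (hs' : s ≤ b + d) : ∃ t, (c ≤ t ∧ t ≤ d) ∧ a ≤ s - t ∧ s - t ≤ b :=
  ⟨max c (s - b), by omega⟩

section Merge

variable {ι : Type} [DecidableEq ι]

def mergeInto (j j' : ι) (x : ι → ℤ) : {m // m ≠ j'} → ℤ :=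
  fun m => x m + if m.1 = j then x j' else 0

theorem sum_mul_mergeInto [Fintype ι] {j j' : ι} (hjj : j ≠ j') (c x : ι → ℤ) (hc : c j = c j') :
    ∑ m : {m // m ≠ j'}, c m * mergeInto j j' x m = ∑ m, c m * x m := by
  rw [Fintype.sum_eq_add_sum_subtype_ne _ j']
  simp only [mergeInto, mul_add, mul_ite, mul_zero, sum_add_distrib]
  rw [Fintype.sum_eq_single ⟨j, hjj⟩ fun m hm => if_neg fun h => hm (Subtype.ext h), if_pos rfl,
    hc, add_comm]

def unmerge (j j' : ι) (t : ℤ) (y : {m // m ≠ j'} → ℤ) : ι → ℤ :=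
  fun m => if hm : m = j' then t else y ⟨m, hm⟩ - if m = j then t else 0

theorem mergeInto_unmerge {j j' : ι} (hjj : j ≠ j') (t : ℤ) (y : {m // m ≠ j'} → ℤ) :
    mergeInto j j' (unmerge j j' t y) = y := by
  funext ⟨m, hm⟩
  by_cases hmj : m = j
  · subst hmj
    simp [mergeInto, unmerge, hm]
  · simp [mergeInto, unmerge, hm, hmj]

end Merge

namespace PMILP

variable {k : ℕ} {ι : Type} [Fintype ι] [DecidableEq ι]

theorem val_mergeInto (hk : 0 < k) (P : PMILP k ι) {j j' : ι} (hjj : j ≠ j')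
    (hcoef : ∀ i, P.e i j = P.e i j') (P' : PMILP k {m // m ≠ j'}) (hd : P'.d = P.d)
    (he : ∀ i (m : ι) (hm : m ≠ j'), P'.e i ⟨m, hm⟩ = P.e i m) (x : ι → ℤ) :
    P'.val hk (mergeInto j j' x) = P.val hk x := by
  refine sup'_congr _ rfl fun i _ => ?_
  simp only [hd, he, ← sum_mul_mergeInto hjj (P.e i) x (hcoef i)]

section Ranges

variable (P : PMILP k ι) {j j' : ι} (hjj : j ≠ j') (P' : PMILP k {m // m ≠ j'})
  (hLj : P'.L ⟨j, hjj⟩ = P.L j + P.L j') (hRj : P'.R ⟨j, hjj⟩ = P.R j + P.R j')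
  (hother : ∀ (m : ι) (hm : m ≠ j'), m ≠ j → P'.L ⟨m, hm⟩ = P.L m ∧ P'.R ⟨m, hm⟩ = P.R m)
include hLj hRj hother

theorem feasible_mergeInto {x : ι → ℤ} (hx : P.Feasible x) : P'.Feasible (mergeInto j j' x) := by
  rintro ⟨m, hm⟩
  by_cases hmj : m = j
  · subst hmj
    have := hx m
    have := hx j'
    simp only [mergeInto, ite_true, hLj, hRj]
    omega
  · simpa [mergeInto, hmj, hother m hm hmj] using hx m

theorem exists_feasible_mergeInto_eq {y : {m // m ≠ j'} → ℤ} (hy : P'.Feasible y) :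
    ∃ x, P.Feasible x ∧ mergeInto j j' x = y := by
  obtain ⟨t, ht, hst⟩ := Int.exists_split_of_le_of_le (P.le j) (P.le j')
    (hLj ▸ (hy ⟨j, hjj⟩).1) (hRj ▸ (hy ⟨j, hjj⟩).2)
  refine ⟨_, fun m => ?_, mergeInto_unmerge hjj t y⟩
  by_cases hm : m = j'
  · subst hm
    simpa [unmerge] using ht
  · by_cases hmj : m = j
    · subst hmj
      simpa [unmerge, hm] using hst
    · simpa [unmerge, hm, hmj, hother m hm hmj] using hy ⟨m, hm⟩

end Ranges

end PMILP

theorem stmt2_general {k n : ℕ} (hk : 0 < k) (P : PMILP k (Fin n))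
    (j j' : Fin n) (hjj : j ≠ j')
    (hcoef : ∀ i, P.e i j = P.e i j')
    (P' : PMILP k {m : Fin n // m ≠ j'})
    (hd : P'.d = P.d)
    (he : ∀ i (m : Fin n) (hm : m ≠ j'), P'.e i ⟨m, hm⟩ = P.e i m)
    (hLj : P'.L ⟨j, hjj⟩ = P.L j + P.L j')
    (hRj : P'.R ⟨j, hjj⟩ = P.R j + P.R j')
    (hother : ∀ (m : Fin n) (hm : m ≠ j'), m ≠ j →
      P'.L ⟨m, hm⟩ = P.L m ∧ P'.R ⟨m, hm⟩ = P.R m) :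
    P.opt hk = P'.opt hk := by
  have hval := P.val_mergeInto hk hjj hcoef P' hd he
  refine P.opt_eq_of_feasible_val P' hk
    (fun x hx => ⟨_, P.feasible_mergeInto hjj P' hLj hRj hother hx, hval x⟩) fun y hy => ?_
  obtain ⟨x, hx, rfl⟩ := P.exists_feasible_mergeInto_eq hjj P' hLj hRj hother hy
  exact ⟨x, hx, (hval x).symm⟩

/-- merging two variables with identical coefficient vectors
(deleting one of them and replacing the range of the other by the sumset of the
two ranges) does not change the optimum of a `(±)ILP`. -/
theorem stmt2 {k n : ℕ} (hk : 0 < k) (hn : 2 ≤ n) (P : PMILP k (Fin n))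
    (j j' : Fin n) (hjj : j ≠ j')
    (hcoef : ∀ i, P.e i j = P.e i j')
    (P' : PMILP k {m : Fin n // m ≠ j'})
    (hd : P'.d = P.d)
    (he : ∀ i (m : Fin n) (hm : m ≠ j'), P'.e i ⟨m, hm⟩ = P.e i m)
    (hLj : P'.L ⟨j, hjj⟩ = P.L j + P.L j')
    (hRj : P'.R ⟨j, hjj⟩ = P.R j + P.R j')
    (hother : ∀ (m : Fin n) (hm : m ≠ j'), m ≠ j →
      P'.L ⟨m, hm⟩ = P.L m ∧ P'.R ⟨m, hm⟩ = P.R m) :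
    P.opt hk = P'.opt hk :=
  stmt2_general hk P j j' hjj hcoef P' hd he hLj hRj hother
end

section
/- Let A = (a_1, …, a_5) be 5 sequences in ℤ^ℓ and fix i ∈ {1, …, 5}. There exists an interval system B = (B_1, …, B_ℓ) such that every i-border sequence x ∈ ℤ^ℓ is consistent with B, and for every column j for which B_j is proper, G_j(B_j) = {i}. -/
/-- `a i` governs `x j` (w.r.t. the column medians `m`): `x j` is in the center,
or moving `x j` towards the center increases the distance to `a i`. -/
def Governs {ℓ : ℕ} (a : Fin 5 → Fin ℓ → ℤ) (m x : Fin ℓ → ℤ) (j : Fin ℓ) (i : Fin 5) : Prop :=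
  x j = m j ∨ (x j < m j ∧ a i j ≤ x j) ∨ (m j < x j ∧ x j ≤ a i j)

/-- `G_j(x)`: the set of indices `i` such that `a i` governs `x j`. -/
def GovSet {ℓ : ℕ} (a : Fin 5 → Fin ℓ → ℤ) (m x : Fin ℓ → ℤ) (j : Fin ℓ) : Set (Fin 5) :=
  {i | Governs a m x j i}

/-- A basic interval: `proper p` is the interval `[p+1, p+2]` (1-indexed) and
`degen p` is the degenerate interval `[p+1, p+1]` (1-indexed). -/
inductive BInt : Type
  | proper : Fin 4 → BInt
  | degen : Fin 5 → BInt

/-- Consistency of a value with a basic interval, w.r.t. the sorted column values `s`. -/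
def BInt.Consistent (s : Fin 5 → ℤ) : BInt → ℤ → Prop
  | .proper p, v => s p.castSucc ≤ v ∧ v ≤ s p.succ
  | .degen p, v => v = s p

/-- The set `G_j(I)` associated with a proper basic interval, w.r.t. the ordering
permutation `π` of the column: `G([1,2]) = {π 1}`, `G([2,3]) = {π 1, π 2}`,
`G([3,4]) = {π 4, π 5}`, `G([4,5]) = {π 5}` (1-indexed). -/
def GIset (π : Equiv.Perm (Fin 5)) (p : Fin 4) : Set (Fin 5) :=
  if p = 0 then {π 0}
  else if p = 1 then {π 0, π 1}
  else if p = 2 then {π 3, π 4}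
  else {π 4}

/-- `x` is an `i`-border sequence. -/
def IsBorderSeq {ℓ : ℕ} (a : Fin 5 → Fin ℓ → ℤ) (m : Fin ℓ → ℤ) (i : Fin 5)
    (x : Fin ℓ → ℤ) : Prop :=
  ∀ j, x j = a i j ∨ GovSet a m x j = {i}

/-!
Column by column: if `a i` is the smallest entry of the column take `[1,2]`, if it is the largest
take `[4,5]`, and otherwise the degenerate interval at the rank of `a i`. An `i`-border value
either equals `a i j`, which lies in each of these intervals, or is governed by `a i` alone. In the
latter case it is off the median (where every sequence governs), and if, say, it lies below, then
`a (π 0)` governs it as well, so `π 0 = i`, while `a (π 1)`, which does not govern it, lies above it.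
-/

def borderInterval (π : Equiv.Perm (Fin 5)) (i : Fin 5) : BInt :=
  if π 0 = i then .proper 0 else if π 4 = i then .proper 3 else .degen (π⁻¹ i)

theorem GIset_of_borderInterval_eq_proper {π : Equiv.Perm (Fin 5)} {i : Fin 5} {p : Fin 4}
    (h : borderInterval π i = .proper p) : GIset π p = {i} := by
  unfold borderInterval at h
  split_ifs at h with h0 h4 <;> cases h
  · simp [GIset, h0]
  · simp [GIset, h4]

section Column

variable {ℓ : ℕ} {a : Fin 5 → Fin ℓ → ℤ} {m x : Fin ℓ → ℤ} {j : Fin ℓ} {π : Equiv.Perm (Fin 5)}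
  {i : Fin 5}

theorem borderInterval_consistent_self (hπ : Monotone fun p => a (π p) j) :
    (borderInterval π i).Consistent (fun p => a (π p) j) (a i j) := by
  unfold borderInterval
  split_ifs with h0 h4
  · subst h0
    exact ⟨le_rfl, hπ (by decide : (0 : Fin 5) ≤ 1)⟩
  · subst h4
    exact ⟨hπ (by decide : (3 : Fin 5) ≤ 4), le_rfl⟩
  · simp [BInt.Consistent]

theorem ne_of_govSet_eq_singleton (h : GovSet a m x j = {i}) : x j ≠ m j := by
  intro hxm
  have h0 : (0 : Fin 5) ∈ GovSet a m x j := Or.inl hxm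
  have h1 : (1 : Fin 5) ∈ GovSet a m x j := Or.inl hxm
  rw [h] at h0 h1
  exact absurd (h0.trans h1.symm) (by decide)

theorem eq_first_of_govSet_eq_singleton (hπ : Monotone fun p => a (π p) j)
    (h : GovSet a m x j = {i}) (hlt : x j < m j) (hle : a i j ≤ x j) :
    π 0 = i ∧ x j ≤ a (π 1) j := by
  have hmin : a (π 0) j ≤ a i j := by simpa using hπ (Fin.zero_le (π⁻¹ i))
  have h0 : π 0 ∈ GovSet a m x j := Or.inr (Or.inl ⟨hlt, hmin.trans hle⟩)
  rw [h] at h0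
  refine ⟨h0, not_lt.mp fun h1 => ?_⟩
  have h1 : π 1 ∈ GovSet a m x j := Or.inr (Or.inl ⟨hlt, h1.le⟩)
  rw [h, ← h0] at h1
  exact absurd (π.injective h1) (by decide)

theorem eq_last_of_govSet_eq_singleton (hπ : Monotone fun p => a (π p) j)
    (h : GovSet a m x j = {i}) (hlt : m j < x j) (hle : x j ≤ a i j) :
    π 4 = i ∧ a (π 3) j ≤ x j := by
  have hmax : a i j ≤ a (π 4) j := by simpa using hπ (Fin.le_last (π⁻¹ i))
  have h4 : π 4 ∈ GovSet a m x j := Or.inr (Or.inr ⟨hlt, hle.trans hmax⟩)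
  rw [h] at h4
  refine ⟨h4, not_lt.mp fun h3 => ?_⟩
  have h3 : π 3 ∈ GovSet a m x j := Or.inr (Or.inr ⟨hlt, h3.le⟩)
  rw [h, ← h4] at h3
  exact absurd (π.injective h3) (by decide)

theorem borderInterval_consistent_of_govSet_eq_singleton (hπ : Monotone fun p => a (π p) j)
    (h : GovSet a m x j = {i}) :
    (borderInterval π i).Consistent (fun p => a (π p) j) (x j) := by
  have hi : i ∈ GovSet a m x j := h ▸ rfl
  rcases hi with hxm | ⟨hlt, hle⟩ | ⟨hlt, hle⟩
  · exact absurd hxm (ne_of_govSet_eq_singleton h)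
  · obtain ⟨h0, hx1⟩ := eq_first_of_govSet_eq_singleton hπ h hlt hle
    rw [borderInterval, if_pos h0]
    exact ⟨by simpa [h0] using hle, hx1⟩
  · obtain ⟨h4, hx3⟩ := eq_last_of_govSet_eq_singleton hπ h hlt hle
    have h0 : π 0 ≠ i := fun h0 => absurd (π.injective (h0.trans h4.symm)) (by decide)
    rw [borderInterval, if_neg h0, if_pos h4]
    exact ⟨hx3, by simpa [h4] using hle⟩

end Column

/-- there is an interval system consistent with every `i`-border
sequence whose proper intervals `B j` all satisfy `G_j(B j) = {i}`. -/
theorem stmt13 {ℓ : ℕ} (a : Fin 5 → Fin ℓ → ℤ) (π : Fin ℓ → Equiv.Perm (Fin 5))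
    (hπ : ∀ j, Monotone fun p => a (π j p) j) (i : Fin 5) :
    ∃ B : Fin ℓ → BInt,
      (∀ x : Fin ℓ → ℤ, IsBorderSeq a (fun j => a (π j 2) j) i x →
        ∀ j, (B j).Consistent (fun p => a (π j p) j) (x j)) ∧
      (∀ j p, B j = BInt.proper p → GIset (π j) p = {i}) := by
  refine ⟨fun j => borderInterval (π j) i, fun x hx j => ?_,
    fun j _ => GIset_of_borderInterval_eq_proper⟩
  rcases hx j with hxa | hgov
  · exact hxa ▸ borderInterval_consistent_self (hπ j)
  · exact borderInterval_consistent_of_govSet_eq_singleton (hπ j) hgov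
end

section
/- Let A = (a_1, …, a_5) be 5 sequences in ℤ^ℓ and fix i ∈ {1, …, 5}. There exists an interval system M = (M_1, …, M_ℓ) such that every i-middle sequence x ∈ ℤ^ℓ is consistent with M, and for every column j for which M_j is proper, |G_j(M_j)| = 2 and i ∈ G_j(M_j). -/
/-- `x` is an `i`-middle sequence. -/
def IsMiddleSeq {ℓ : ℕ} (a : Fin 5 → Fin ℓ → ℤ) (m : Fin ℓ → ℤ) (i : Fin 5)
    (x : Fin ℓ → ℤ) : Prop :=
  ∀ j, i ∈ GovSet a m x j ∧ 2 ≤ (GovSet a m x j).ncard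

/-!
Columns are independent, so fix one with sorted values `s₁ ≤ … ≤ s₅` and median `m = s₃`.
If `a_i < m`, then `x ≤ m` since `a_i` governs `x`; and when `x < m` the governing indices are
those with `a_k ≤ x`, so `x < s₂` would leave only `π(1)` governing. Hence `x ∈ [s₂, s₃]`, and
`i ∈ {π(1), π(2)} = G([2,3])`. The case `a_i > m` is symmetric with `[3,4]`, and `a_i = m`
forces `x = m`, i.e. the degenerate interval `[3,3]`.
-/

section SortedByPerm

variable {α : Type*} [Preorder α] {v : Fin 5 → α} {σ : Equiv.Perm (Fin 5)} {k : Fin 5}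

lemma eq_perm_zero_of_lt_perm_one (hσ : Monotone (v ∘ σ)) (h : v k < v (σ 1)) : k = σ 0 := by
  obtain ⟨q, rfl⟩ := σ.surjective k
  have : q < 1 := hσ.reflect_lt h
  rw [show q = 0 by omega]

lemma eq_perm_four_of_perm_three_lt (hσ : Monotone (v ∘ σ)) (h : v (σ 3) < v k) : k = σ 4 := by
  obtain ⟨q, rfl⟩ := σ.surjective k
  have : 3 < q := hσ.reflect_lt h
  rw [show q = 4 by omega]

lemma eq_perm_zero_or_eq_perm_one_of_lt_perm_two (hσ : Monotone (v ∘ σ)) (h : v k < v (σ 2)) :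
    k = σ 0 ∨ k = σ 1 := by
  obtain ⟨q, rfl⟩ := σ.surjective k
  have : q < 2 := hσ.reflect_lt h
  rcases (show q = 0 ∨ q = 1 by omega) with rfl | rfl <;> simp

lemma eq_perm_three_or_eq_perm_four_of_perm_two_lt (hσ : Monotone (v ∘ σ)) (h : v (σ 2) < v k) :
    k = σ 3 ∨ k = σ 4 := by
  obtain ⟨q, rfl⟩ := σ.surjective k
  have : 2 < q := hσ.reflect_lt h
  rcases (show q = 3 ∨ q = 4 by omega) with rfl | rfl <;> simp

end SortedByPerm

section Column

variable {ℓ : ℕ} {a : Fin 5 → Fin ℓ → ℤ} {m x : Fin ℓ → ℤ} {j : Fin ℓ} {σ : Equiv.Perm (Fin 5)}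
  {i k : Fin 5}

lemma governs_iff_of_lt (h : x j < m j) : Governs a m x j k ↔ a k j ≤ x j := by
  unfold Governs; omega

lemma governs_iff_of_gt (h : m j < x j) : Governs a m x j k ↔ x j ≤ a k j := by
  unfold Governs; omega

lemma Governs.le_of_lt (hi : Governs a m x j i) (h : a i j < m j) : x j ≤ m j := by
  unfold Governs at hi; omega

lemma Governs.ge_of_gt (hi : Governs a m x j i) (h : m j < a i j) : m j ≤ x j := by
  unfold Governs at hi; omega

lemma Governs.eq_of_eq (hi : Governs a m x j i) (h : a i j = m j) : x j = m j := by
  unfold Governs at hi; omega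

lemma ncard_govSet_le_one_of_lt (hσ : Monotone fun p => a (σ p) j) (hm : x j < m j)
    (hx : x j < a (σ 1) j) : (GovSet a m x j).ncard ≤ 1 := by
  have hsub : GovSet a m x j ⊆ {σ 0} := fun k hk =>
    eq_perm_zero_of_lt_perm_one (v := fun k => a k j) hσ
      (((governs_iff_of_lt hm).1 hk).trans_lt hx)
  exact (Set.ncard_le_ncard hsub).trans (Set.ncard_singleton _).le

lemma ncard_govSet_le_one_of_gt (hσ : Monotone fun p => a (σ p) j) (hm : m j < x j)
    (hx : a (σ 3) j < x j) : (GovSet a m x j).ncard ≤ 1 := by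
  have hsub : GovSet a m x j ⊆ {σ 4} := fun k hk =>
    eq_perm_four_of_perm_three_lt (v := fun k => a k j) hσ
      (hx.trans_le ((governs_iff_of_gt hm).1 hk))
  exact (Set.ncard_le_ncard hsub).trans (Set.ncard_singleton _).le

def medianInterval (a : Fin 5 → Fin ℓ → ℤ) (σ : Equiv.Perm (Fin 5)) (j : Fin ℓ) (i : Fin 5) :
    BInt :=
  if a i j < a (σ 2) j then .proper 1
  else if a (σ 2) j < a i j then .proper 2
  else .degen 2

lemma consistent_medianInterval (hσ : Monotone fun p => a (σ p) j) (hm : m j = a (σ 2) j)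
    (hi : Governs a m x j i) (hcard : 2 ≤ (GovSet a m x j).ncard) :
    (medianInterval a σ j i).Consistent (fun p => a (σ p) j) (x j) := by
  unfold medianInterval
  split_ifs with hlt hgt
  · have hxm : x j ≤ m j := hi.le_of_lt (hm ▸ hlt)
    refine ⟨?_, hxm.trans_eq hm⟩
    by_contra! hx
    have hs : a (σ 1) j ≤ m j := hm ▸ hσ (by decide : (1 : Fin 5) ≤ 2)
    have := ncard_govSet_le_one_of_lt hσ (hx.trans_le hs) hx
    omega
  · have hxm : m j ≤ x j := hi.ge_of_gt (hm ▸ hgt)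
    refine ⟨hm.symm.trans_le hxm, ?_⟩
    by_contra! hx
    have hs : m j ≤ a (σ 3) j := hm ▸ hσ (by decide : (2 : Fin 5) ≤ 3)
    have := ncard_govSet_le_one_of_gt hσ (hs.trans_lt hx) hx
    omega
  · exact (hi.eq_of_eq (by omega)).trans hm

lemma GIset_of_medianInterval_eq_proper (hσ : Monotone fun p => a (σ p) j) {p : Fin 4}
    (h : medianInterval a σ j i = .proper p) : (GIset σ p).ncard = 2 ∧ i ∈ GIset σ p := by
  unfold medianInterval at h
  split_ifs at h with hlt hgt <;> cases h
  · exact ⟨Set.ncard_pair (σ.injective.ne (by decide)),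
      eq_perm_zero_or_eq_perm_one_of_lt_perm_two (v := fun k => a k j) hσ hlt⟩
  · exact ⟨Set.ncard_pair (σ.injective.ne (by decide)),
      eq_perm_three_or_eq_perm_four_of_perm_two_lt (v := fun k => a k j) hσ hgt⟩

end Column

/-- there is an interval system consistent with every `i`-middle
sequence whose proper intervals `M j` all satisfy `|G_j(M j)| = 2` and `i ∈ G_j(M j)`. -/
theorem stmt14 {ℓ : ℕ} (a : Fin 5 → Fin ℓ → ℤ) (π : Fin ℓ → Equiv.Perm (Fin 5))
    (hπ : ∀ j, Monotone fun p => a (π j p) j) (i : Fin 5) :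
    ∃ M : Fin ℓ → BInt,
      (∀ x : Fin ℓ → ℤ, IsMiddleSeq a (fun j => a (π j 2) j) i x →
        ∀ j, (M j).Consistent (fun p => a (π j p) j) (x j)) ∧
      (∀ j p, M j = BInt.proper p → (GIset (π j) p).ncard = 2 ∧ i ∈ GIset (π j) p) :=
  ⟨fun j => medianInterval a (π j) j i,
    fun _ hx j => consistent_medianInterval (hπ j) rfl (hx j).1 (hx j).2,
    fun j _ h => GIset_of_medianInterval_eq_proper (hπ j) h⟩
end

section
/- Let A = (a_1, …, a_5) be 5 sequences in ℤ^ℓ and fix a 3-element set Δ ⊆ {1, …, 5}. There exists an interval system T = (T_1, …, T_ℓ) such that every Δ-triangle sequence x ∈ ℤ^ℓ is consistent with T, and for every column j for which T_j is proper, |G_j(T_j)| = 2 and G_j(T_j) ⊆ Δ. -/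
/-- `x` is a `Δ`-triangle sequence. -/
def IsTriangleSeq {ℓ : ℕ} (a : Fin 5 → Fin ℓ → ℤ) (m : Fin ℓ → ℤ) (Δ : Set (Fin 5))
    (x : Fin ℓ → ℤ) : Prop :=
  ∀ j, 2 ≤ (Δ ∩ GovSet a m x j).ncard

open Set

lemma inter_eq_pair_of_subset {α : Type*} {Δ S : Set α} {u v : α} (huv : u ≠ v)
    (hS : S ⊆ {u, v}) (h : 2 ≤ (Δ ∩ S).ncard) : Δ ∩ S = {u, v} :=
  eq_of_subset_of_ncard_le (inter_subset_right.trans hS) (by rwa [ncard_pair huv])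

open Classical in
noncomputable def triangleInterval (σ : Equiv.Perm (Fin 5)) (Δ : Set (Fin 5)) : BInt :=
  if σ 0 ∈ Δ ∧ σ 1 ∈ Δ then .proper 1
  else if σ 3 ∈ Δ ∧ σ 4 ∈ Δ then .proper 2
  else .degen 2

lemma triangleInterval_eq_proper {σ : Equiv.Perm (Fin 5)} {Δ : Set (Fin 5)} {p : Fin 4}
    (h : triangleInterval σ Δ = .proper p) : (GIset σ p).ncard = 2 ∧ GIset σ p ⊆ Δ := by
  unfold triangleInterval at h
  split_ifs at h with hlow hhigh <;> cases h
  · exact ⟨ncard_pair (σ.injective.ne (by decide)), pair_subset hlow.1 hlow.2⟩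
  · exact ⟨ncard_pair (σ.injective.ne (by decide)), pair_subset hhigh.1 hhigh.2⟩

lemma not_lowPair_and_highPair_subset {σ : Equiv.Perm (Fin 5)} {Δ : Set (Fin 5)}
    (hΔ : Δ.ncard ≤ 3) : ¬ ((σ 0 ∈ Δ ∧ σ 1 ∈ Δ) ∧ (σ 3 ∈ Δ ∧ σ 4 ∈ Δ)) := by
  rintro ⟨⟨h0, h1⟩, h3, h4⟩
  have hsub : σ '' {0, 1, 3, 4} ⊆ Δ := by
    rintro _ ⟨q, hq, rfl⟩
    rcases hq with rfl | rfl | rfl | rfl <;> assumption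
  have hcard : (σ '' {0, 1, 3, 4}).ncard = 4 := by
    rw [ncard_image_of_injective _ σ.injective]
    simp [ncard_insert_of_notMem]
  have := ncard_le_ncard hsub
  omega

section Column

variable {ℓ : ℕ} {a : Fin 5 → Fin ℓ → ℤ} {m x : Fin ℓ → ℤ} {j : Fin ℓ} {i : Fin 5}

lemma Governs.le_of_lt_median (h : Governs a m x j i) (hx : x j < m j) : a i j ≤ x j := by
  rcases h with h | h | h <;> omega

lemma Governs.le_of_median_lt (h : Governs a m x j i) (hx : m j < x j) : x j ≤ a i j := by
  rcases h with h | h | h <;> omega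

variable {σ : Equiv.Perm (Fin 5)} {Δ : Set (Fin 5)}

lemma govSet_subset_of_lt_median (hσ : Monotone fun p => a (σ p) j) (hm : m j = a (σ 2) j)
    (hx : x j < m j) : GovSet a m x j ⊆ {σ 0, σ 1} := by
  intro i hi
  obtain ⟨q, rfl⟩ := σ.surjective i
  have hq : q < 2 := hσ.reflect_lt ((Governs.le_of_lt_median hi hx).trans_lt (hm ▸ hx))
  fin_cases q <;> simp_all

lemma govSet_subset_of_median_lt (hσ : Monotone fun p => a (σ p) j) (hm : m j = a (σ 2) j)
    (hx : m j < x j) : GovSet a m x j ⊆ {σ 3, σ 4} := by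
  intro i hi
  obtain ⟨q, rfl⟩ := σ.surjective i
  have hq : 2 < q := hσ.reflect_lt ((hm ▸ hx).trans_le (Governs.le_of_median_lt hi hx))
  fin_cases q <;> simp_all

lemma consistent_triangleInterval (hσ : Monotone fun p => a (σ p) j) (hΔ : Δ.ncard ≤ 3)
    (hm : m j = a (σ 2) j) (hx : 2 ≤ (Δ ∩ GovSet a m x j).ncard) :
    (triangleInterval σ Δ).Consistent (fun p => a (σ p) j) (x j) := by
  rcases lt_trichotomy (x j) (m j) with hlt | heq | hgt
  · have hpair := inter_eq_pair_of_subset (σ.injective.ne (by decide))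
      (govSet_subset_of_lt_median hσ hm hlt) hx
    have h0 : σ 0 ∈ Δ ∩ GovSet a m x j := hpair ▸ mem_insert _ _
    have h1 : σ 1 ∈ Δ ∩ GovSet a m x j := hpair ▸ mem_insert_of_mem _ rfl
    rw [triangleInterval, if_pos ⟨h0.1, h1.1⟩]
    exact ⟨h1.2.le_of_lt_median hlt, (hm ▸ hlt).le⟩
  · have hmed : x j = a (σ 2) j := heq.trans hm
    unfold triangleInterval
    split_ifs
    · exact ⟨(hσ (by decide : (1 : Fin 5) ≤ 2)).trans hmed.ge, hmed.le⟩
    · exact ⟨hmed.ge, hmed.le.trans (hσ (by decide : (2 : Fin 5) ≤ 3))⟩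
    · exact hmed
  · have hpair := inter_eq_pair_of_subset (σ.injective.ne (by decide))
      (govSet_subset_of_median_lt hσ hm hgt) hx
    have h3 : σ 3 ∈ Δ ∩ GovSet a m x j := hpair ▸ mem_insert _ _
    have h4 : σ 4 ∈ Δ ∩ GovSet a m x j := hpair ▸ mem_insert_of_mem _ rfl
    rw [triangleInterval, if_neg fun hlow => not_lowPair_and_highPair_subset hΔ
      ⟨hlow, h3.1, h4.1⟩, if_pos ⟨h3.1, h4.1⟩]
    exact ⟨(hm ▸ hgt).le, h3.2.le_of_median_lt hgt⟩

end Column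

/-- for a 3-element set `Δ`, there is an interval system consistent with
every `Δ`-triangle sequence whose proper intervals `T j` all satisfy `|G_j(T j)| = 2`
and `G_j(T j) ⊆ Δ`. -/
theorem stmt15 {ℓ : ℕ} (a : Fin 5 → Fin ℓ → ℤ) (π : Fin ℓ → Equiv.Perm (Fin 5))
    (hπ : ∀ j, Monotone fun p => a (π j p) j) (Δ : Set (Fin 5)) (hΔ : Δ.ncard = 3) :
    ∃ T : Fin ℓ → BInt,
      (∀ x : Fin ℓ → ℤ, IsTriangleSeq a (fun j => a (π j 2) j) Δ x →
        ∀ j, (T j).Consistent (fun p => a (π j p) j) (x j)) ∧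
      (∀ j p, T j = BInt.proper p → (GIset (π j) p).ncard = 2 ∧ GIset (π j) p ⊆ Δ) :=
  ⟨fun j => triangleInterval (π j) Δ,
    fun _ hx j => consistent_triangleInterval (hπ j) hΔ.le rfl (hx j),
    fun _ _ => triangleInterval_eq_proper⟩
end

section
/- Consider an easy (±)ILP in canonical form with n ≥ 2 variables, nonnegative integers D_1, …, D_n, and integers K', K_1, …, K_n all of the same parity with K_1 ≤ … ≤ K_n and K' < K_n. Let ℓ = max{i : K_i = K_1}, and assume D_i ≥ 1 for all 1 ≤ i ≤ ℓ. Then there exists an optimal feasible solution (y_1, …, y_n) with y_ℓ ≥ 1. -/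
/-- Feasibility for an easy `(±)ILP` in canonical form: `0 ≤ y i ≤ D i`. -/
def canonFeasible {ι : Type} [Fintype ι] (D : ι → ℕ) (y : ι → ℤ) : Prop :=
  ∀ i, 0 ≤ y i ∧ y i ≤ (D i : ℤ)

/-- The value of `y` for an easy `(±)ILP` in canonical form:
`max (∑ i, y i + K') (max_i (2 * y i - ∑ j, y j + K i))`. -/
def canonVal {ι : Type} [Fintype ι] (K' : ℤ) (K : ι → ℤ) (y : ι → ℤ) : ℤ :=
  Finset.univ.fold max (∑ i, y i + K') fun i => 2 * y i - ∑ j, y j + K i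

/-- The optimum of an easy `(±)ILP` in canonical form. -/
noncomputable def canonOpt {ι : Type} [Fintype ι] (D : ι → ℕ) (K' : ℤ) (K : ι → ℤ) : ℤ :=
  sInf {v : ℤ | ∃ y : ι → ℤ, canonFeasible D y ∧ canonVal K' K y = v}

/-! Values are bounded below by `K'`, so an optimal solution `y` exists; suppose `y l = 0`.
If some `y j` is positive, moving one unit from `j` to `l` keeps `∑ y` and, as `y l < y j` and
`K l ≤ K j`, increases no term of the value. Otherwise `y = 0`, of value at least `K n`. If
`K l < K n`, the unit vector `e l` has value at most `K n`. If `K l = K n`, then `l = n ≠ 1`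
by maximality of `l`; as `K'` and `K n` have the same parity, `K' + 2 ≤ K n`, and `e 1 + e l`
has value at most `K n`. -/

section

variable {ι : Type} [Fintype ι] {D : ι → ℕ} {K' : ℤ} {K y : ι → ℤ}

lemma canonVal_le_iff {v : ℤ} :
    canonVal K' K y ≤ v ↔ ∑ i, y i + K' ≤ v ∧ ∀ i, 2 * y i - ∑ j, y j + K i ≤ v := by
  simp [canonVal, Finset.fold_max_le]

lemma sum_add_le_canonVal (K' : ℤ) (K y : ι → ℤ) : ∑ i, y i + K' ≤ canonVal K' K y :=
  (canonVal_le_iff.1 le_rfl).1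

lemma term_le_canonVal (K' : ℤ) (K y : ι → ℤ) (i : ι) :
    2 * y i - ∑ j, y j + K i ≤ canonVal K' K y :=
  (canonVal_le_iff.1 le_rfl).2 i

lemma le_canonVal_zero (K' : ℤ) (K : ι → ℤ) (i : ι) : K i ≤ canonVal K' K 0 := by
  simpa using term_le_canonVal K' K 0 i

lemma bddBelow_canonVal_feasible (D : ι → ℕ) (K' : ℤ) (K : ι → ℤ) :
    BddBelow {v : ℤ | ∃ y : ι → ℤ, canonFeasible D y ∧ canonVal K' K y = v} := by
  refine ⟨K', ?_⟩
  rintro _ ⟨y, hy, rfl⟩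
  have : 0 ≤ ∑ i, y i := Finset.sum_nonneg fun i _ => (hy i).1
  linarith [sum_add_le_canonVal K' K y]

lemma canonFeasible.canonOpt_le (hy : canonFeasible D y) : canonOpt D K' K ≤ canonVal K' K y :=
  csInf_le (bddBelow_canonVal_feasible D K' K) ⟨y, hy, rfl⟩

lemma exists_canonVal_eq_canonOpt (D : ι → ℕ) (K' : ℤ) (K : ι → ℤ) :
    ∃ y, canonFeasible D y ∧ canonVal K' K y = canonOpt D K' K := by
  refine Int.csInf_mem ?_ (bddBelow_canonVal_feasible D K' K)
  exact ⟨_, 0, fun _ => ⟨le_rfl, by positivity⟩, rfl⟩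

lemma canonVal_eq_canonOpt_of_le {z : ι → ℤ} (hz : canonFeasible D z)
    (hy : canonVal K' K y = canonOpt D K' K) (h : canonVal K' K z ≤ canonVal K' K y) :
    canonVal K' K z = canonOpt D K' K :=
  le_antisymm (hy ▸ h) hz.canonOpt_le

variable [DecidableEq ι] {l j : ι}

lemma canonFeasible.transfer (hy : canonFeasible D y) (hlD : y l < D l) (hlj : y l < y j) :
    canonFeasible D (y + Pi.single l 1 - Pi.single j 1) := by
  intro i
  have := hy i
  have := hy l
  simp only [Pi.add_apply, Pi.sub_apply, Pi.single_apply]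
  split_ifs <;> subst_vars <;> omega

lemma canonVal_transfer_le (hlj : y l < y j) (hK : K l ≤ K j) :
    canonVal K' K (y + Pi.single l 1 - Pi.single j 1) ≤ canonVal K' K y := by
  have hsum : ∑ i, (y + Pi.single l 1 - Pi.single j 1 : ι → ℤ) i = ∑ i, y i := by
    simp [Finset.sum_add_distrib, Finset.sum_sub_distrib]
  rw [canonVal_le_iff, hsum]
  refine ⟨sum_add_le_canonVal K' K y, fun i => ?_⟩
  have := term_le_canonVal K' K y i
  have := term_le_canonVal K' K y j
  simp only [Pi.add_apply, Pi.sub_apply, Pi.single_apply]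
  split_ifs <;> subst_vars <;> omega

lemma canonFeasible_single (hl : 1 ≤ D l) : canonFeasible D (Pi.single l 1) := by
  intro i
  simp only [Pi.single_apply]
  split_ifs <;> subst_vars <;> omega

lemma canonFeasible_single_add_single (hjl : j ≠ l) (hl : 1 ≤ D l) (hj : 1 ≤ D j) :
    canonFeasible D (Pi.single l 1 + Pi.single j 1) := by
  intro i
  simp only [Pi.add_apply, Pi.single_apply]
  split_ifs <;> subst_vars <;> first | exact absurd rfl hjl | omega

lemma canonVal_single_le {m : ι} (hl : K l < K m) (hK' : K' < K m) :
    canonVal K' K (Pi.single l 1) ≤ canonVal K' K 0 := by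
  have hm := le_canonVal_zero K' K m
  rw [canonVal_le_iff, Finset.sum_pi_single']
  simp only [Finset.mem_univ, if_true]
  refine ⟨by omega, fun i => ?_⟩
  have := le_canonVal_zero K' K i
  simp only [Pi.single_apply]
  split_ifs <;> subst_vars <;> omega

lemma canonVal_single_add_single_le {m : ι} (hjl : j ≠ l) (hK' : K' + 2 ≤ K m) :
    canonVal K' K (Pi.single l 1 + Pi.single j 1) ≤ canonVal K' K 0 := by
  have hm := le_canonVal_zero K' K m
  have hsum : ∑ i, (Pi.single l 1 + Pi.single j 1 : ι → ℤ) i = 2 := by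
    simp [Finset.sum_add_distrib]
  refine canonVal_le_iff.2 ⟨by omega, fun i => ?_⟩
  have := le_canonVal_zero K' K i
  rw [hsum]
  simp only [Pi.add_apply, Pi.single_apply]
  split_ifs <;> subst_vars <;> first | exact absurd rfl hjl | omega

lemma exists_canonVal_le_canonVal_zero {m : ι} (hpar : K m % 2 = K' % 2) (hKm : K' < K m)
    (hlm : K l ≤ K m) (hDl : 1 ≤ D l) (hj : K l = K m → ∃ j ≠ l, 1 ≤ D j) :
    ∃ z, canonFeasible D z ∧ canonVal K' K z ≤ canonVal K' K 0 ∧ 1 ≤ z l := by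
  rcases hlm.lt_or_eq with hlt | heq
  · exact ⟨_, canonFeasible_single hDl, canonVal_single_le hlt hKm, by simp⟩
  obtain ⟨j, hjl, hDj⟩ := hj heq
  exact ⟨_, canonFeasible_single_add_single hjl hDl hDj,
    canonVal_single_add_single_le hjl (by omega : K' + 2 ≤ K m), by simp [hjl.symm]⟩

end

/-- for a canonical easy `(±)ILP` with `n ≥ 2` variables, constant terms
of the same parity, `K₁ ≤ … ≤ Kₙ`, `K' < Kₙ`, `l = max {i : K i = K 1}` and `D i ≥ 1`
for all `i ≤ l`, there is an optimal feasible solution `y` with `y l ≥ 1`. -/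
theorem stmt18 {n : ℕ} (hn : 2 ≤ n) (D : Fin n → ℕ) (K' : ℤ) (K : Fin n → ℤ)
    (hpar : ∀ i, K i % 2 = K' % 2) (hmono : Monotone K)
    (hKn : K' < K ⟨n - 1, by omega⟩)
    (l : Fin n) (hl : K l = K ⟨0, by omega⟩) (hlmax : ∀ i, K i = K ⟨0, by omega⟩ → i ≤ l)
    (hD : ∀ i, i ≤ l → 1 ≤ D i) :
    ∃ y : Fin n → ℤ, canonFeasible D y ∧ canonVal K' K y = canonOpt D K' K ∧ 1 ≤ y l := by
  obtain ⟨y, hyF, hyopt⟩ := exists_canonVal_eq_canonOpt D K' K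
  suffices ∃ z, canonFeasible D z ∧ canonVal K' K z ≤ canonVal K' K y ∧ 1 ≤ z l by
    obtain ⟨z, hzF, hz, hzl⟩ := this
    exact ⟨z, hzF, canonVal_eq_canonOpt_of_le hzF hyopt hz, hzl⟩
  by_cases hyl : 1 ≤ y l
  · exact ⟨y, hyF, le_rfl, hyl⟩
  have hyl0 : y l = 0 := by have := (hyF l).1; omega
  by_cases hpos : ∃ j, y l < y j
  · obtain ⟨j, hlj⟩ := hpos
    have hK : K l ≤ K j := hl ▸ hmono (Fin.mk_le_mk.2 (Nat.zero_le _))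
    exact ⟨_, hyF.transfer (by have := hD l le_rfl; omega) hlj, canonVal_transfer_le hlj hK,
      by simp [ne_of_apply_ne y hlj.ne', hyl0]⟩
  push Not at hpos
  obtain rfl : y = 0 := funext fun i => ((hpos i).trans hyl0.le).antisymm (hyF i).1
  have hlm : l ≤ ⟨n - 1, by omega⟩ := Fin.mk_le_mk.2 (Nat.le_sub_one_of_lt l.isLt)
  refine exists_canonVal_le_canonVal_zero (hpar _) hKn (hmono hlm) (hD l le_rfl) fun hlast => ?_
  have hml : n - 1 ≤ l.val := hlmax _ (hlast.symm.trans hl)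
  exact ⟨⟨0, by omega⟩, Fin.ne_of_val_ne (by dsimp only; omega), hD _ (Nat.zero_le _)⟩
end

section
/- Consider an easy (±)ILP in canonical form with n ≥ 2 variables, nonnegative integers D_1, …, D_n and integers K', K_1, …, K_n with K_1 ≤ … ≤ K_n. Suppose for some index i, K_i = K_1 and D_i = 0. Then the optimum equals the optimum of the canonical program with n−1 variables obtained by deleting the variable y_i together with the constant K_i (keeping K' and all remaining D's and K's). -/
/-!
Since `D i₀ = 0`, every feasible `y` has `y i₀ = 0`, so deleting `y i₀` changes neither
`∑ y` nor the feasibility of the other coordinates. The only term of `canonVal` that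
disappears is `2 y i₀ - ∑ y + K i₀ = -∑ y + K i₀`, and it is dominated by the term
`2 y j - ∑ y + K j` of any other index `j`, because `y j ≥ 0` and `K i₀` is the least `K j`.
-/

section

variable {ι : Type} [DecidableEq ι]

theorem Finset.fold_max_univ_eq_fold_max_subtype_ne [Fintype ι] {α : Type*} [LinearOrder α]
    (b : α) (f : ι → α) {a j : ι} (hja : j ≠ a) (hfa : f a ≤ f j) :
    Finset.univ.fold max b f = Finset.univ.fold max b fun m : {m // m ≠ a} => f m := by
  apply le_antisymm
  · refine (Finset.fold_max_le _).2 ⟨(Finset.le_fold_max _).2 (Or.inl le_rfl),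
      fun x _ => (Finset.le_fold_max _).2 (Or.inr ?_)⟩
    by_cases hx : x = a
    · exact ⟨⟨j, hja⟩, Finset.mem_univ _, hx ▸ hfa⟩
    · exact ⟨⟨x, hx⟩, Finset.mem_univ _, le_rfl⟩
  · exact (Finset.fold_max_le _).2 ⟨(Finset.le_fold_max _).2 (Or.inl le_rfl), fun x _ =>
      (Finset.le_fold_max _).2 (Or.inr ⟨x.1, Finset.mem_univ _, le_rfl⟩)⟩

theorem canonVal_eq_canonVal_subtype_ne [Fintype ι] (K' : ℤ) {K : ι → ℤ} {i₀ j : ι}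
    (hj : j ≠ i₀) (hK : K i₀ ≤ K j) {y : ι → ℤ} (hy₀ : y i₀ = 0) (hy : ∀ i, 0 ≤ y i) :
    canonVal K' K y =
      canonVal K' (fun m : {m // m ≠ i₀} => K m) (fun m => y m) := by
  have hsum : ∑ i, y i = ∑ m : {m // m ≠ i₀}, y m := by
    rw [Fintype.sum_eq_add_sum_subtype_ne y i₀, hy₀, zero_add]
  unfold canonVal
  rw [hsum]
  exact Finset.fold_max_univ_eq_fold_max_subtype_ne _ _ hj (by linarith [hy j])

def extendByZero (i₀ : ι) (z : {m // m ≠ i₀} → ℤ) (i : ι) : ℤ :=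
  if h : i = i₀ then 0 else z ⟨i, h⟩

theorem extendByZero_self (i₀ : ι) (z : {m // m ≠ i₀} → ℤ) : extendByZero i₀ z i₀ = 0 :=
  dif_pos rfl

theorem extendByZero_restrict (i₀ : ι) (z : {m // m ≠ i₀} → ℤ) :
    (fun m : {m // m ≠ i₀} => extendByZero i₀ z m) = z :=
  funext fun m => dif_neg m.2

theorem canonFeasible_extendByZero [Fintype ι] {D : ι → ℕ} {i₀ : ι} {z : {m // m ≠ i₀} → ℤ}
    (hz : canonFeasible (fun m : {m // m ≠ i₀} => D m) z) :
    canonFeasible D (extendByZero i₀ z) := by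
  intro i
  by_cases h : i = i₀
  · subst h
    simp [extendByZero_self]
  · simpa [extendByZero, h] using hz ⟨i, h⟩

theorem canonOpt_eq_canonOpt_subtype_ne [Fintype ι] (D : ι → ℕ) (K' : ℤ) {K : ι → ℤ} {i₀ j : ι}
    (hj : j ≠ i₀) (hK : ∀ i, K i₀ ≤ K i) (hD : D i₀ = 0) :
    canonOpt D K' K =
      canonOpt (fun m : {m // m ≠ i₀} => D m) K' (fun m => K m) := by
  unfold canonOpt
  congr 1
  ext v
  constructor
  · rintro ⟨y, hy, rfl⟩
    have hy₀ : y i₀ = 0 := le_antisymm (by simpa [hD] using (hy i₀).2) (hy i₀).1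
    exact ⟨fun m => y m, fun m => hy m,
      (canonVal_eq_canonVal_subtype_ne K' hj (hK j) hy₀ fun i => (hy i).1).symm⟩
  · rintro ⟨z, hz, rfl⟩
    have hy := canonFeasible_extendByZero hz
    refine ⟨extendByZero i₀ z, hy, ?_⟩
    rw [canonVal_eq_canonVal_subtype_ne K' hj (hK j) (extendByZero_self i₀ z)
      fun i => (hy i).1, extendByZero_restrict]

end

/-- for a canonical easy `(±)ILP` with `n ≥ 2` variables and
`K₁ ≤ … ≤ Kₙ`, if `K i₀ = K 1` and `D i₀ = 0` for some index `i₀`, then deleting the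
variable `y i₀` together with the constant `K i₀` does not change the optimum. -/
theorem stmt19 {n : ℕ} (hn : 2 ≤ n) (D : Fin n → ℕ) (K' : ℤ) (K : Fin n → ℤ)
    (hmono : Monotone K) (i₀ : Fin n)
    (hKi : K i₀ = K ⟨0, by omega⟩) (hDi : D i₀ = 0) :
    canonOpt D K' K =
      canonOpt (fun m : {m : Fin n // m ≠ i₀} => D m.1) K' (fun m => K m.1) := by
  have : Nontrivial (Fin n) := Fin.nontrivial_iff_two_le.2 hn
  obtain ⟨j, hj⟩ := exists_ne i₀
  have hKmin : ∀ i, K i₀ ≤ K i := fun i => hKi ▸ hmono (Nat.zero_le i.val)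
  exact canonOpt_eq_canonOpt_subtype_ne D K' hj hKmin hDi
end
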